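/- Fix K ≥ 1, W > 0, weights w_1, …, w_K > 0 with w_0 = 0, normalized noise powers η_0 ≥ η_1 ≥ … ≥ η_K > 0, and P_max > 0. With f_l(x) = W·(w_l·log₂(x + η_l) − w_{l−1}·log₂(x + η_{l−1})), suppose (x*_1, …, x*_K) maximizes Σ_{l=1}^{K} f_l(x_l) over the chain set {P_max ≥ x_1 ≥ … ≥ x_K ≥ 0}. Then for every budget 0 ≤ P̄ ≤ P_max, the truncated vector (min{x*_1, P̄}, …, min{x*_K, P̄}) maximizes Σ_{l=1}^{K} f_l(x_l) over the chain set {P̄ ≥ x_1 ≥ … ≥ x_K ≥ 0}. -/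

import Mathlib

/-- `f_{q,q'}(y) = W·(w_{q'}·log₂(y + η_{q'}) − w_{q−1}·log₂(y + η_{q−1}))`. -/
noncomputable def fqq (W : ℝ) (w η : ℕ → ℝ) (q q' : ℕ) (y : ℝ) : ℝ :=
  W * (w q' * Real.logb 2 (y + η q') - w (q - 1) * Real.logb 2 (y + η (q - 1)))

/-- The chain set `C(P) = {x : P ≥ x 1 ≥ … ≥ x K ≥ 0}` (only coordinates `1, …, K` matter). -/
def chainSet (K : ℕ) (P : ℝ) : Set (ℕ → ℝ) :=
  {x | x 1 ≤ P ∧ (∀ l, 1 ≤ l → l < K → x (l + 1) ≤ x l) ∧ 0 ≤ x K}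

/-- The single-carrier objective `∑_{l=1}^{K} f_l(x_l)` with `f_l = f_{l,l}`. -/
noncomputable def objSC (K : ℕ) (W : ℝ) (w η : ℕ → ℝ) (x : ℕ → ℝ) : ℝ :=
  ∑ l ∈ Finset.Icc 1 K, fqq W w η l l (x l)

/-!
Work with natural logarithms (`objLn`). Summation by parts writes the objective as
`∑ j, (relGain w η j (x j) - relGain w η j (x (j + 1)))` up to a constant, where
`relGain w η j u = w j log (u + η j) - w 0 log (u + η 0)`. At a maximiser, lowering the top block
`x 1, …, x m` cannot help, and this first-order condition, together with the fact that the
derivative of `relGain w η j` decreases wherever it is nonnegative (because `η j ≤ η 0`), shows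
that every `relGain w η j` is nondecreasing on `[x (j + 1), x j]`. Hence the capped objective
`a ↦ objLn (min x a)` is nondecreasing. Removing the first user turns `w 0` into `w 1 > 0`, so the
argument is run for `w 0 ≥ 0`; induction on `K` then gives
`objLn y ≤ objLn (min x (y 1))` for every feasible `y`, and `y 1 ≤ P` finishes.
-/

open Real Finset

theorem sum_Icc_sub_pred_eq (F : ℕ → ℝ → ℝ) (y : ℕ → ℝ) (K : ℕ) :
    ∑ l ∈ Icc 1 K, (F l (y l) - F (l - 1) (y l)) =
      ∑ j ∈ Icc 1 K, (F j (y j) - F j (y (j + 1))) + F K (y (K + 1)) - F 0 (y 1) := by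
  induction K with
  | zero => simp
  | succ K ih =>
    rw [sum_Icc_succ_top (by omega), sum_Icc_succ_top (by omega), ih, Nat.add_sub_cancel]
    ring

theorem sub_min_eq_sub_max_min (f : ℝ → ℝ) {n x : ℝ} (h : n ≤ x) (a : ℝ) :
    f (min x a) - f (min n a) = f (max n (min x a)) - f n := by
  rcases le_total a n with han | hna
  · simp [min_eq_right han, min_eq_right (han.trans h), max_eq_left han]
  · rw [min_eq_left hna, max_eq_right (le_min h hna)]

theorem div_sub_div_le_of_nonneg {A B c d s u : ℝ} (hB : 0 ≤ B) (hc : 0 < c) (hcd : c ≤ d)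
    (hs : 0 ≤ s) (hsu : s ≤ u) (hN : 0 ≤ A / (u + c) - B / (u + d)) :
    A / (u + c) - B / (u + d) ≤ A / (s + c) - B / (s + d) := by
  have huc : 0 < u + c := by linarith
  have hud : 0 < u + d := by linarith
  have hsc : 0 < s + c := by linarith
  have hsd : 0 < s + d := by linarith
  rw [sub_nonneg, div_le_div_iff₀ hud huc] at hN
  have key : 0 ≤ A * (s + d) * (u + d) - B * (s + c) * (u + c) := by
    nlinarith [mul_nonneg (sub_nonneg.2 hN) hsd.le,
      mul_nonneg (mul_nonneg hB huc.le) (sub_nonneg.2 hcd)]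
  rw [div_sub_div _ _ huc.ne' hud.ne', div_sub_div _ _ hsc.ne' hsd.ne',
    div_le_div_iff₀ (mul_pos huc hud) (mul_pos hsc hsd)]
  nlinarith [mul_nonneg (sub_nonneg.2 hsu) key]

theorem HasDerivAt.nonpos_of_isMaxOn_Icc {f : ℝ → ℝ} {f' a b : ℝ} (hf : HasDerivAt f f' a)
    (hab : a < b) (hmax : IsMaxOn f (Set.Icc a b) a) : f' ≤ 0 := by
  have hcone : b - a ∈ posTangentConeAt (Set.Icc a b) a :=
    sub_mem_posTangentConeAt_of_segment_subset (segment_eq_Icc hab.le).subset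
  have := hmax.localize.hasFDerivWithinAt_nonpos hf.hasDerivWithinAt.hasFDerivWithinAt hcone
  rw [ContinuousLinearMap.toSpanSingleton_apply, smul_eq_mul] at this
  exact nonpos_of_mul_nonpos_right this (sub_pos.2 hab)

noncomputable def objLn (K : ℕ) (w η : ℕ → ℝ) (y : ℕ → ℝ) : ℝ :=
  ∑ l ∈ Icc 1 K, (w l * log (y l + η l) - w (l - 1) * log (y l + η (l - 1)))

theorem objSC_eq_mul_objLn (K : ℕ) (W : ℝ) (w η y : ℕ → ℝ) :
    objSC K W w η y = W / log 2 * objLn K w η y := by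
  have hlog : log 2 ≠ 0 := (log_pos one_lt_two).ne'
  simp only [objSC, objLn, fqq, logb, mul_sum]
  refine sum_congr rfl fun l _ => ?_
  field_simp

theorem objLn_congr {K : ℕ} {w η y z : ℕ → ℝ} (h : ∀ l ∈ Icc 1 K, y l = z l) :
    objLn K w η y = objLn K w η z :=
  sum_congr rfl fun l hl => by rw [h l hl]

theorem objLn_succ (K : ℕ) (w η y : ℕ → ℝ) :
    objLn (K + 1) w η y = (w 1 * log (y 1 + η 1) - w 0 * log (y 1 + η 0)) +
      objLn K (fun j => w (j + 1)) (fun j => η (j + 1)) (fun j => y (j + 1)) := by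
  induction K with
  | zero => simp [objLn]
  | succ K ih =>
    rw [objLn, sum_Icc_succ_top (by omega), ← objLn, ih, objLn, objLn,
      sum_Icc_succ_top (by omega : 1 ≤ K + 1), Nat.add_sub_cancel, Nat.sub_add_cancel (by omega)]
    ring

structure IsSICProfile (K : ℕ) (w η : ℕ → ℝ) : Prop where
  weight_nonneg : ∀ l ≤ K, 0 ≤ w l
  noise_pos : ∀ l ≤ K, 0 < η l
  noise_anti : ∀ l < K, η (l + 1) ≤ η l

namespace IsSICProfile

variable {K : ℕ} {w η : ℕ → ℝ}

theorem noise_le_noise_zero (hp : IsSICProfile K w η) {l : ℕ} (hl : l ≤ K) : η l ≤ η 0 := by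
  induction l with
  | zero => rfl
  | succ l ih => exact (hp.noise_anti l hl).trans (ih (by omega))

theorem shift (hp : IsSICProfile (K + 1) w η) :
    IsSICProfile K (fun j => w (j + 1)) (fun j => η (j + 1)) :=
  ⟨fun _ hl => hp.weight_nonneg _ (by omega), fun _ hl => hp.noise_pos _ (by omega),
    fun _ hl => hp.noise_anti _ (by omega)⟩

end IsSICProfile

section chainSet

variable {K : ℕ} {B : ℝ} {x : ℕ → ℝ}

def chainNext (K : ℕ) (x : ℕ → ℝ) (j : ℕ) : ℝ := if j < K then x (j + 1) else 0

theorem le_of_mem_chainSet (hx : x ∈ chainSet K B) {i j : ℕ} (hi : 1 ≤ i) (hij : i ≤ j)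
    (hj : j ≤ K) : x j ≤ x i := by
  induction j, hij using Nat.le_induction with
  | base => rfl
  | succ j hij ih => exact (hx.2.1 j (hi.trans hij) (by omega)).trans (ih (by omega))

theorem nonneg_of_mem_chainSet (hx : x ∈ chainSet K B) {l : ℕ} (hl : 1 ≤ l) (hlK : l ≤ K) :
    0 ≤ x l :=
  hx.2.2.trans (le_of_mem_chainSet hx hl hlK le_rfl)

theorem chainNext_nonneg (hx : x ∈ chainSet K B) {j : ℕ} (hj : 1 ≤ j) : 0 ≤ chainNext K x j := by
  unfold chainNext
  split_ifs with h
  · exact nonneg_of_mem_chainSet hx (by omega) h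
  · rfl

theorem chainNext_le (hx : x ∈ chainSet K B) {j : ℕ} (hj : j ∈ Icc 1 K) :
    chainNext K x j ≤ x j := by
  rw [mem_Icc] at hj
  unfold chainNext
  split_ifs with h
  · exact hx.2.1 j hj.1 h
  · exact nonneg_of_mem_chainSet hx hj.1 hj.2

theorem chainSet_mono {B' : ℝ} (hB : B ≤ B') : chainSet K B ⊆ chainSet K B' :=
  fun _ hx => ⟨hx.1.trans hB, hx.2⟩

theorem min_mem_chainSet (hx : x ∈ chainSet K B) {P : ℝ} (hP : 0 ≤ P) :
    (fun l => min (x l) P) ∈ chainSet K P :=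
  ⟨min_le_right _ _, fun l hl hlK => min_le_min_right P (hx.2.1 l hl hlK), le_min hx.2.2 hP⟩

theorem tail_mem_chainSet (hK : 1 ≤ K) {y : ℕ → ℝ} (hy : y ∈ chainSet (K + 1) B) :
    (fun j => y (j + 1)) ∈ chainSet K (y 1) :=
  ⟨hy.2.1 1 le_rfl (by omega), fun l hl hlK => hy.2.1 (l + 1) (by omega) (by omega), hy.2.2⟩

theorem cons_mem_chainSet (hK : 1 ≤ K) {a : ℝ} (ha : a ≤ B) {z : ℕ → ℝ} (hz : z ∈ chainSet K a) :
    (fun j => if j ≤ 1 then a else z (j - 1)) ∈ chainSet (K + 1) B := by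
  refine ⟨by simpa using ha, fun l hl hlK => ?_, ?_⟩
  · obtain ⟨k, rfl⟩ : ∃ k, l = k + 1 := ⟨l - 1, by omega⟩
    rcases Nat.eq_zero_or_pos k with rfl | hk
    · simpa using hz.1
    · simpa [show ¬ k + 1 ≤ 1 by omega, show ¬ k + 1 + 1 ≤ 1 by omega] using
        hz.2.1 k hk (by omega)
  · simpa [show ¬ K + 1 ≤ 1 by omega] using hz.2.2

def lowerTop (m : ℕ) (Δ : ℝ) (x : ℕ → ℝ) (l : ℕ) : ℝ := if l ≤ m then x l - Δ else x l

theorem lowerTop_zero (m : ℕ) (x : ℕ → ℝ) : lowerTop m 0 x = x :=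
  funext fun l => by simp [lowerTop]

theorem lowerTop_mem_chainSet (hx : x ∈ chainSet K B) {m : ℕ} (hm : m ∈ Icc 1 K) {Δ : ℝ}
    (hΔ : 0 ≤ Δ) (hΔm : Δ ≤ x m - chainNext K x m) : lowerTop m Δ x ∈ chainSet K B := by
  rw [mem_Icc] at hm
  refine ⟨by simp only [lowerTop, if_pos hm.1]; linarith [hx.1], fun l hl hlK => ?_, ?_⟩
  · have := hx.2.1 l hl hlK
    unfold lowerTop
    split_ifs with h1 h2 h2
    · linarith
    · omega
    · obtain rfl : l = m := by omega
      simp only [chainNext, if_pos hlK] at hΔm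
      linarith
    · exact this
  · unfold lowerTop
    split_ifs with h
    · obtain rfl : m = K := by omega
      simp only [chainNext, lt_irrefl, if_false] at hΔm
      linarith
    · exact hx.2.2

end chainSet

noncomputable def relGain (w η : ℕ → ℝ) (j : ℕ) (u : ℝ) : ℝ :=
  w j * log (u + η j) - w 0 * log (u + η 0)

theorem objLn_eq_sum_sub_relGain (K : ℕ) (w η y : ℕ → ℝ) :
    objLn K w η y = ∑ l ∈ Icc 1 K, (relGain w η l (y l) - relGain w η (l - 1) (y l)) :=
  sum_congr rfl fun l _ => by simp only [relGain]; ring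

theorem objLn_eq_sum_relGain (K : ℕ) (w η y : ℕ → ℝ) :
    objLn K w η y = ∑ j ∈ Icc 1 K, (relGain w η j (y j) - relGain w η j (chainNext K y j)) +
      relGain w η K 0 := by
  set y₀ := Function.update y (K + 1) 0
  have hy₀ : ∀ l ∈ Icc 1 K, y₀ l = y l ∧ y₀ (l + 1) = chainNext K y l := by
    intro l hl
    rw [mem_Icc] at hl
    refine ⟨Function.update_of_ne (by omega) _ _, ?_⟩
    rcases hl.2.lt_or_eq with h | rfl
    · rw [chainNext, if_pos h]; exact Function.update_of_ne (by omega) _ _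
    · rw [chainNext, if_neg (lt_irrefl _)]; exact Function.update_self _ _ _
  rw [objLn_congr fun l hl => (hy₀ l hl).1.symm, objLn_eq_sum_sub_relGain, sum_Icc_sub_pred_eq,
    show y₀ (K + 1) = 0 from Function.update_self _ _ _]
  simp only [relGain, sub_self, sub_zero]
  exact congrArg (· + _) (sum_congr rfl fun l hl => by rw [(hy₀ l hl).1, (hy₀ l hl).2])

theorem chainNext_min (K : ℕ) (x : ℕ → ℝ) {a : ℝ} (ha : 0 ≤ a) (j : ℕ) :
    chainNext K (fun l => min (x l) a) j = min (chainNext K x j) a := by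
  unfold chainNext
  split_ifs
  · rfl
  · exact (min_eq_left ha).symm

theorem objLn_min_le_objLn_min {K : ℕ} {w η x : ℕ → ℝ}
    (hnext : ∀ j ∈ Icc 1 K, chainNext K x j ≤ x j)
    (hmono : ∀ j ∈ Icc 1 K, MonotoneOn (relGain w η j) (Set.Icc (chainNext K x j) (x j)))
    {a b : ℝ} (ha : 0 ≤ a) (hab : a ≤ b) :
    objLn K w η (fun l => min (x l) a) ≤ objLn K w η (fun l => min (x l) b) := by
  simp_rw [objLn_eq_sum_relGain, chainNext_min K x ha, chainNext_min K x (ha.trans hab)]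
  refine add_le_add_left (sum_le_sum fun j hj => ?_) _
  -- up to a constant, the `j`-th term is `relGain w η j` at `a` clamped to `[chainNext K x j, x j]`
  have hmem : ∀ c, max (chainNext K x j) (min (x j) c) ∈ Set.Icc (chainNext K x j) (x j) :=
    fun c => ⟨le_max_left _ _, max_le (hnext j hj) (min_le_left _ _)⟩
  rw [sub_min_eq_sub_max_min _ (hnext j hj), sub_min_eq_sub_max_min _ (hnext j hj)]
  exact sub_le_sub_right (hmono j hj (hmem a) (hmem b) (by gcongr)) _

noncomputable def relGainDeriv (w η : ℕ → ℝ) (j : ℕ) (u : ℝ) : ℝ :=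
  w j / (u + η j) - w 0 / (u + η 0)

theorem hasDerivAt_relGain (w η : ℕ → ℝ) (j : ℕ) {u : ℝ} (hj : 0 < u + η j) (h0 : 0 < u + η 0) :
    HasDerivAt (relGain w η j) (relGainDeriv w η j u) u := by
  have hlog : ∀ c, 0 < u + c → HasDerivAt (fun v => log (v + c)) (1 / (u + c)) u :=
    fun c hc => ((hasDerivAt_id u).add_const c).log hc.ne'
  have h := ((hlog _ hj).const_mul (w j)).fun_sub ((hlog _ h0).const_mul (w 0))
  simp only [mul_one_div] at h
  exact h

section IsMaxOn

variable {K : ℕ} {w η : ℕ → ℝ} {B : ℝ} {x : ℕ → ℝ}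

theorem relGainDeriv_le (hp : IsSICProfile K w η) {j : ℕ} (hj : j ≤ K) {s u : ℝ} (hs : 0 ≤ s)
    (hsu : s ≤ u) (hu : 0 ≤ relGainDeriv w η j u) : relGainDeriv w η j u ≤ relGainDeriv w η j s :=
  div_sub_div_le_of_nonneg (hp.weight_nonneg 0 (Nat.zero_le K)) (hp.noise_pos j hj)
    (hp.noise_le_noise_zero hj) hs hsu hu

theorem relGain_monotoneOn (hp : IsSICProfile K w η) {j : ℕ} (hj : j ≤ K) {t : ℝ}
    (ht : 0 ≤ relGainDeriv w η j t) : MonotoneOn (relGain w η j) (Set.Icc 0 t) := by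
  have hderiv : ∀ u ∈ Set.Icc 0 t, HasDerivAt (relGain w η j) (relGainDeriv w η j u) u :=
    fun u hu => hasDerivAt_relGain w η j (by linarith [hu.1, hp.noise_pos j hj])
      (by linarith [hu.1, hp.noise_pos 0 (Nat.zero_le K)])
  refine monotoneOn_of_hasDerivWithinAt_nonneg (f' := relGainDeriv w η j) (convex_Icc 0 t)
    (fun u hu => (hderiv u hu).continuousAt.continuousWithinAt) (fun u hu => ?_) (fun u hu => ?_)
  all_goals rw [interior_Icc] at hu
  · exact (hderiv u (Set.Ioo_subset_Icc_self hu)).hasDerivWithinAt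
  · exact ht.trans (relGainDeriv_le hp hj hu.1.le hu.2.le ht)

theorem hasDerivAt_objLn_lowerTop (hp : IsSICProfile K w η) (hx : x ∈ chainSet K B) {m : ℕ}
    (hm : m ≤ K) :
    HasDerivAt (fun Δ => objLn K w η (lowerTop m Δ x))
      (-∑ l ∈ Icc 1 m, (relGainDeriv w η l (x l) - relGainDeriv w η (l - 1) (x l))) 0 := by
  have hterm : ∀ l ∈ Icc 1 K, HasDerivAt
      (fun Δ => relGain w η l (lowerTop m Δ x l) - relGain w η (l - 1) (lowerTop m Δ x l))
      (if l ≤ m then -(relGainDeriv w η l (x l) - relGainDeriv w η (l - 1) (x l)) else 0) 0 := by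
    intro l hl
    rw [mem_Icc] at hl
    by_cases hlm : l ≤ m
    · simp only [lowerTop, hlm, if_true]
      have hxl := nonneg_of_mem_chainSet hx hl.1 hl.2
      have hsub : HasDerivAt (fun Δ : ℝ => x l - Δ) (-1) 0 := by
        simpa using (hasDerivAt_id (0 : ℝ)).const_sub (x l)
      have hd : ∀ i ≤ K, HasDerivAt (fun Δ => relGain w η i (x l - Δ))
          (relGainDeriv w η i (x l) * -1) 0 := fun i hi =>
        (hasDerivAt_relGain w η i (by linarith [hp.noise_pos i hi])
          (by linarith [hp.noise_pos 0 (Nat.zero_le K)])).comp_of_eq 0 hsub (by simp)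
      exact ((hd l hl.2).fun_sub (hd (l - 1) (by omega))).congr_deriv (by ring)
    · simp only [lowerTop, hlm, if_false]
      exact hasDerivAt_const _ _
  have hfilter : (Icc 1 K).filter (· ≤ m) = Icc 1 m := by
    ext l; simp only [mem_filter, mem_Icc]; omega
  simp_rw [objLn_eq_sum_sub_relGain]
  exact (HasDerivAt.fun_sum hterm).congr_deriv (by rw [← sum_filter, hfilter, sum_neg_distrib])

theorem sum_relGainDeriv_nonneg_of_isMaxOn (hp : IsSICProfile K w η) (hx : x ∈ chainSet K B)
    (hopt : IsMaxOn (objLn K w η) (chainSet K B) x) {m : ℕ} (hm : m ∈ Icc 1 K)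
    (hgap : chainNext K x m < x m) :
    0 ≤ ∑ l ∈ Icc 1 m, (relGainDeriv w η l (x l) - relGainDeriv w η (l - 1) (x l)) := by
  have hmax : IsMaxOn (fun Δ => objLn K w η (lowerTop m Δ x))
      (Set.Icc 0 (x m - chainNext K x m)) 0 := fun Δ hΔ => by
    show objLn K w η (lowerTop m Δ x) ≤ objLn K w η (lowerTop m 0 x)
    rw [lowerTop_zero]
    exact hopt (lowerTop_mem_chainSet hx hm hΔ.1 hΔ.2)
  linarith [(hasDerivAt_objLn_lowerTop hp hx (mem_Icc.1 hm).2).nonpos_of_isMaxOn_Icc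
    (sub_pos.2 hgap) hmax]

theorem sum_relGainDeriv_le_of_isMaxOn (hp : IsSICProfile K w η) (hx : x ∈ chainSet K B)
    (hopt : IsMaxOn (objLn K w η) (chainSet K B) x) {m : ℕ} (hm : m ≤ K) :
    ∑ l ∈ Icc 1 m, (relGainDeriv w η l (x l) - relGainDeriv w η (l - 1) (x l)) ≤
      relGainDeriv w η m (x m) := by
  induction m with
  | zero => simp [relGainDeriv]
  | succ m ih =>
    rw [sum_Icc_succ_top (by omega), Nat.add_sub_cancel]
    suffices relGainDeriv w η m (x m) ≤ relGainDeriv w η m (x (m + 1)) by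
      linarith [ih (by omega)]
    rcases Nat.eq_zero_or_pos m with rfl | hm0
    · simp [relGainDeriv]
    rcases (hx.2.1 m hm0 hm).eq_or_lt with heq | hlt
    · rw [heq]
    have hgap : chainNext K x m < x m := by rwa [chainNext, if_pos (show m < K by omega)]
    exact relGainDeriv_le hp (by omega) (nonneg_of_mem_chainSet hx (by omega) hm) hlt.le
      ((sum_relGainDeriv_nonneg_of_isMaxOn hp hx hopt (mem_Icc.2 ⟨hm0, by omega⟩) hgap).trans
        (ih (by omega)))

theorem relGain_monotoneOn_of_isMaxOn (hp : IsSICProfile K w η) (hx : x ∈ chainSet K B)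
    (hopt : IsMaxOn (objLn K w η) (chainSet K B) x) {j : ℕ} (hj : j ∈ Icc 1 K) :
    MonotoneOn (relGain w η j) (Set.Icc (chainNext K x j) (x j)) := by
  rcases (chainNext_le hx hj).eq_or_lt with heq | hgap
  · rw [heq, Set.Icc_self]
    exact Set.subsingleton_singleton.monotoneOn _
  have hj' := mem_Icc.1 hj
  exact (relGain_monotoneOn hp hj'.2 ((sum_relGainDeriv_nonneg_of_isMaxOn hp hx hopt hj hgap).trans
    (sum_relGainDeriv_le_of_isMaxOn hp hx hopt hj'.2))).mono
    (Set.Icc_subset_Icc_left (chainNext_nonneg hx hj'.1))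

theorem objLn_min_le_objLn_min_of_isMaxOn (hp : IsSICProfile K w η) (hx : x ∈ chainSet K B)
    (hopt : IsMaxOn (objLn K w η) (chainSet K B) x) {a b : ℝ} (ha : 0 ≤ a) (hab : a ≤ b) :
    objLn K w η (fun l => min (x l) a) ≤ objLn K w η (fun l => min (x l) b) :=
  objLn_min_le_objLn_min (fun _ hj => chainNext_le hx hj)
    (fun _ hj => relGain_monotoneOn_of_isMaxOn hp hx hopt hj) ha hab

end IsMaxOn

section Truncation

variable {K : ℕ} {w η : ℕ → ℝ} {B : ℝ} {x : ℕ → ℝ}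

theorem isMaxOn_tail (hK : 1 ≤ K) (hx : x ∈ chainSet (K + 1) B)
    (hopt : IsMaxOn (objLn (K + 1) w η) (chainSet (K + 1) B) x) :
    IsMaxOn (objLn K (fun j => w (j + 1)) (fun j => η (j + 1))) (chainSet K (x 1))
      (fun j => x (j + 1)) := by
  intro z hz
  have h := hopt (cons_mem_chainSet hK hx.1 hz)
  have htail : objLn K (fun j => w (j + 1)) (fun j => η (j + 1))
      (fun j => if j + 1 ≤ 1 then x 1 else z (j + 1 - 1)) =
      objLn K (fun j => w (j + 1)) (fun j => η (j + 1)) z :=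
    objLn_congr fun l hl => by simp [show ¬ l + 1 ≤ 1 by simp at hl; omega]
  change objLn (K + 1) w η _ ≤ objLn (K + 1) w η x at h
  rw [objLn_succ, objLn_succ, htail] at h
  simpa using h

theorem objLn_le_objLn_min_first_of_le (hx : x ∈ chainSet K B)
    (hopt : IsMaxOn (objLn K w η) (chainSet K B) x)
    {y : ℕ → ℝ} (hy : y ∈ chainSet K B) (hxy : x 1 ≤ y 1) :
    objLn K w η y ≤ objLn K w η (fun l => min (x l) (y 1)) := by
  rw [objLn_congr fun l hl => min_eq_left <|
    (le_of_mem_chainSet hx le_rfl (mem_Icc.1 hl).1 (mem_Icc.1 hl).2).trans hxy]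
  exact hopt hy

theorem objLn_le_objLn_min_first (hp : IsSICProfile K w η) (hK : 1 ≤ K) (hx : x ∈ chainSet K B)
    (hopt : IsMaxOn (objLn K w η) (chainSet K B) x) {y : ℕ → ℝ} (hy : y ∈ chainSet K B) :
    objLn K w η y ≤ objLn K w η (fun l => min (x l) (y 1)) := by
  induction K, hK using Nat.le_induction generalizing w η B x y with
  | base =>
    rcases le_or_gt (x 1) (y 1) with hxy | hyx
    · exact objLn_le_objLn_min_first_of_le hx hopt hy hxy
    refine (objLn_congr fun l hl => ?_).le
    obtain rfl : l = 1 := by simp at hl; omega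
    exact (min_eq_right hyx.le).symm
  | succ K hK ih =>
    rcases le_or_gt (x 1) (y 1) with hxy | hyx
    · exact objLn_le_objLn_min_first_of_le hx hopt hy hxy
    have hx' := tail_mem_chainSet hK hx
    have hy' := tail_mem_chainSet hK hy
    have hopt' := isMaxOn_tail hK hx hopt
    rw [objLn_succ, objLn_succ, min_eq_right hyx.le]
    gcongr
    calc objLn K (fun j => w (j + 1)) (fun j => η (j + 1)) (fun j => y (j + 1))
        ≤ objLn K (fun j => w (j + 1)) (fun j => η (j + 1)) (fun j => min (x (j + 1)) (y 2)) :=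
          ih hp.shift hx' hopt' (chainSet_mono hyx.le hy')
      _ ≤ objLn K (fun j => w (j + 1)) (fun j => η (j + 1)) (fun j => min (x (j + 1)) (y 1)) :=
          objLn_min_le_objLn_min_of_isMaxOn hp.shift hx' hopt'
            (nonneg_of_mem_chainSet hy' le_rfl hK) hy'.1

end Truncation

theorem stmt_8_general
    (K : ℕ) (hK : 1 ≤ K) (W : ℝ) (hW : 0 < W)
    (w η : ℕ → ℝ) (hw0 : w 0 = 0)
    (hw : ∀ l, 1 ≤ l → l ≤ K → 0 < w l)
    (hη_pos : ∀ l, l ≤ K → 0 < η l)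
    (hη_mono : ∀ l, l < K → η (l + 1) ≤ η l)
    (Pmax : ℝ)
    (xstar : ℕ → ℝ) (hxs : xstar ∈ chainSet K Pmax)
    (hmax : ∀ y ∈ chainSet K Pmax, objSC K W w η y ≤ objSC K W w η xstar)
    (P : ℝ) (h0P : 0 ≤ P) (hPP : P ≤ Pmax) :
    (fun l => min (xstar l) P) ∈ chainSet K P ∧
      ∀ y ∈ chainSet K P, objSC K W w η y ≤ objSC K W w η (fun l => min (xstar l) P) := by
  have hp : IsSICProfile K w η := by
    refine ⟨fun l hl => ?_, hη_pos, hη_mono⟩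
    rcases Nat.eq_zero_or_pos l with rfl | hl0
    · exact hw0.ge
    · exact (hw l hl0 hl).le
  have hscale : 0 < W / log 2 := div_pos hW (log_pos one_lt_two)
  have hopt : IsMaxOn (objLn K w η) (chainSet K Pmax) xstar := fun y hy => by
    have h := hmax y hy
    rw [objSC_eq_mul_objLn, objSC_eq_mul_objLn] at h
    exact le_of_mul_le_mul_left h hscale
  refine ⟨min_mem_chainSet hxs h0P, fun y hy => ?_⟩
  rw [objSC_eq_mul_objLn, objSC_eq_mul_objLn]
  refine mul_le_mul_of_nonneg_left ?_ hscale.le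
  calc objLn K w η y ≤ objLn K w η (fun l => min (xstar l) (y 1)) :=
        objLn_le_objLn_min_first hp hK hxs hopt (chainSet_mono hPP hy)
    _ ≤ objLn K w η (fun l => min (xstar l) P) :=
        objLn_min_le_objLn_min_of_isMaxOn hp hxs hopt (nonneg_of_mem_chainSet hy le_rfl hK) hy.1

/-- **Truncation property of single-carrier power control (i-SCPC).**
If `x*` maximizes `∑_l f_l(x_l)` over the chain set with budget `P_max`, then for any
budget `0 ≤ P ≤ P_max` the truncated vector `l ↦ min (x* l) P` maximizes the same
objective over the chain set with budget `P`. -/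
theorem stmt_8
    (K : ℕ) (hK : 1 ≤ K) (W : ℝ) (hW : 0 < W)
    (w η : ℕ → ℝ) (hw0 : w 0 = 0)
    (hw : ∀ l, 1 ≤ l → l ≤ K → 0 < w l)
    (hη_pos : ∀ l, l ≤ K → 0 < η l)
    (hη_mono : ∀ l, l < K → η (l + 1) ≤ η l)
    (Pmax : ℝ) (hPmax : 0 < Pmax)
    (xstar : ℕ → ℝ) (hxs : xstar ∈ chainSet K Pmax)
    (hmax : ∀ y ∈ chainSet K Pmax, objSC K W w η y ≤ objSC K W w η xstar)
    (P : ℝ) (h0P : 0 ≤ P) (hPP : P ≤ Pmax) :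
    (fun l => min (xstar l) P) ∈ chainSet K P ∧
      ∀ y ∈ chainSet K P, objSC K W w η y ≤ objSC K W w η (fun l => min (xstar l) P) :=
  stmt_8_general K hK W hW w η hw0 hw hη_pos hη_mono Pmax xstar hxs hmax P h0P hPP
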